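/- arXiv:1510.07233 — 4 statements merged into one kernel-verified Lean document; each statement's English description precedes it below -/
import Mathlib

section
/- Let β ∈ [0,1] and let D_1, ..., D_n be {0,1}-valued random variables such that for every j ∈ {1,...,n} and every sequence d^{j-1} ∈ {0,1}^{j-1} with Pr[D_1=d_1,...,D_{j-1}=d_{j-1}] > 0, we have Pr[D_j = 1 | D_1=d_1,...,D_{j-1}=d_{j-1}] ≤ β. Then for every k, Pr[Σ_{j=1}^n D_j ≥ k] ≤ P_{n,k}(β) = Σ_{i=k}^n C(n,i) β^i (1-β)^{n-i}. -/
open MeasureTheory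

namespace PBB

noncomputable def tail (β : ℝ) (n k : ℕ) : ℝ :=
  ∑ i ∈ Finset.Icc k n, (n.choose i : ℝ) * β ^ i * (1 - β) ^ (n - i)

lemma sum_Icc_shift (f : ℕ → ℝ) (k n : ℕ) :
    ∑ i ∈ Finset.Icc (k + 1) (n + 1), f i = ∑ m ∈ Finset.Icc k n, f (m + 1) := by
  rw [show k + 1 = 1 + k by ring, show n + 1 = 1 + n by ring,
    ← Finset.map_add_left_Icc, Finset.sum_map]
  simp [add_comm]

lemma tail_zero (β : ℝ) (n : ℕ) : tail β n 0 = 1 := by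
  have hr : Finset.range (n + 1) = Finset.Icc 0 n := by
    rw [Nat.range_eq_Icc_zero_sub_one _ (by omega)]; norm_num
  have h2 : ∑ i ∈ Finset.range (n + 1), (n.choose i : ℝ) * β ^ i * (1 - β) ^ (n - i)
      = (β + (1 - β)) ^ n := by
    rw [add_pow]
    exact Finset.sum_congr rfl fun i _ => by ring
  rw [tail, ← hr, h2]
  norm_num

lemma tail_nonneg {β : ℝ} (hβ0 : 0 ≤ β) (hβ1 : β ≤ 1) (n k : ℕ) : 0 ≤ tail β n k := by
  apply Finset.sum_nonneg
  intro i _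
  have : (0:ℝ) ≤ 1 - β := by linarith
  positivity

lemma tail_anti {β : ℝ} (hβ0 : 0 ≤ β) (hβ1 : β ≤ 1) (n k : ℕ) :
    tail β n (k + 1) ≤ tail β n k := by
  apply Finset.sum_le_sum_of_subset_of_nonneg
  · apply Finset.Icc_subset_Icc_left; omega
  · intro i _ _
    have : (0:ℝ) ≤ 1 - β := by linarith
    positivity

lemma tail_succ (β : ℝ) (n k : ℕ) :
    tail β (n + 1) (k + 1) = (1 - β) * tail β n (k + 1) + β * tail β n k := by
  have hshift : tail β (n+1) (k+1)
      = ∑ m ∈ Finset.Icc k n, ((n+1).choose (m+1) : ℝ) * β ^ (m+1) * (1 - β) ^ (n - m) := by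
    rw [tail, sum_Icc_shift]
    apply Finset.sum_congr rfl
    intro m _
    congr 2
    omega
  have hext : tail β n (k+1)
      = ∑ i ∈ Finset.Icc (k+1) (n+1), (n.choose i : ℝ) * β ^ i * (1 - β) ^ (n - i) := by
    rcases le_or_gt (k+1) (n+1) with h | h
    · rw [Finset.sum_Icc_succ_top h, tail, Nat.choose_eq_zero_of_lt (by omega)]
      simp
    · rw [tail, Finset.Icc_eq_empty (by omega), Finset.Icc_eq_empty (by omega)]
  have h2 : (1 - β) * tail β n (k+1)
      = ∑ m ∈ Finset.Icc k n, (n.choose (m+1) : ℝ) * β ^ (m+1) * (1 - β) ^ (n - m) := by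
    rw [hext, Finset.mul_sum, sum_Icc_shift (fun i => (1 - β) * ((n.choose i : ℝ) * β ^ i * (1 - β) ^ (n - i))) k n]
    apply Finset.sum_congr rfl
    intro m hm
    simp only [Finset.mem_Icc] at hm
    rcases Nat.lt_or_ge m n with h | h
    · have : n - m = (n - (m + 1)) + 1 := by omega
      rw [this]
      ring
    · have : m = n := by omega
      subst this
      simp [Nat.choose_succ_self]
  have hsplit : ∀ m ∈ Finset.Icc k n,
      ((n+1).choose (m+1) : ℝ) * β ^ (m+1) * (1 - β) ^ (n - m)
      = β * ((n.choose m : ℝ) * β ^ m * (1 - β) ^ (n - m))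
        + (n.choose (m+1) : ℝ) * β ^ (m+1) * (1 - β) ^ (n - m) := by
    intro m _
    rw [Nat.choose_succ_succ]
    push_cast
    ring
  rw [hshift, Finset.sum_congr rfl hsplit, Finset.sum_add_distrib, ← Finset.mul_sum, ← h2]
  simp only [tail]
  ring

end PBB

namespace Core

def wins {n : ℕ} (ω : Fin n → Bool) : ℕ := (Finset.univ.filter fun j => ω j = true).card

lemma wins_cons {n : ℕ} (b : Bool) (d : Fin n → Bool) :
    wins (Fin.cons b d) = (if b then 1 else 0) + wins d := by
  simp only [wins, Finset.card_filter, Fin.sum_univ_succ, Fin.cons_zero, Fin.cons_succ]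

lemma sum_cons {n : ℕ} (f : (Fin (n + 1) → Bool) → ℝ) :
    ∑ ω, f ω = (∑ d : Fin n → Bool, f (Fin.cons true d))
      + ∑ d : Fin n → Bool, f (Fin.cons false d) := by
  rw [← Equiv.sum_comp (Fin.consEquiv (fun _ => Bool)) f, Fintype.sum_prod_type,
    Fintype.sum_bool]
  rfl

lemma cons_past_iff {n : ℕ} (b b' : Bool) (d d' : Fin n → Bool) (j : Fin n) :
    (∀ i < j.succ, (Fin.cons b' d' : Fin (n+1) → Bool) i = (Fin.cons b d : Fin (n+1) → Bool) i)
      ↔ (b' = b ∧ ∀ i < j, d' i = d i) := by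
  constructor
  · intro h
    refine ⟨by simpa using h 0 (Fin.succ_pos j), fun i hi => by
      simpa using h i.succ (Fin.succ_lt_succ_iff.mpr hi)⟩
  · rintro ⟨hb, hd⟩ i hi
    induction i using Fin.cases with
    | zero => simpa using hb
    | succ i' => simpa using hd i' (Fin.succ_lt_succ_iff.mp hi)

end Core

namespace PBB
open Core
lemma core (β : ℝ) (hβ0 : 0 ≤ β) (hβ1 : β ≤ 1) :
    ∀ (n : ℕ) (p : (Fin n → Bool) → ℝ), (∀ ω, 0 ≤ p ω) →
    (∀ (j : Fin n) (d : Fin n → Bool),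
      ∑ ω ∈ Finset.univ.filter (fun ω => ω j = true ∧ ∀ i < j, ω i = d i), p ω
        ≤ β * ∑ ω ∈ Finset.univ.filter (fun ω => ∀ i < j, ω i = d i), p ω) →
    ∀ k, ∑ ω ∈ Finset.univ.filter (fun ω => k ≤ wins ω), p ω ≤ (∑ ω, p ω) * tail β n k := by
  intro n
  induction n with
  | zero =>
    intro p hp hcond k
    match k with
    | 0 =>
      simp only [Nat.zero_le, Finset.filter_true_of_mem, fun _ => trivial, tail_zero, mul_one]
      exact le_of_eq (by simp)
    | k + 1 =>
      have h1 : Finset.univ.filter (fun ω : Fin 0 → Bool => k + 1 ≤ wins ω) = ∅ := by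
        apply Finset.filter_false_of_mem
        intro ω _
        simp [wins]
      have h2 : tail β 0 (k + 1) = 0 := by
        rw [tail, Finset.Icc_eq_empty (by omega), Finset.sum_empty]
      rw [h1, h2, Finset.sum_empty, mul_zero]
  | succ n ih =>
    intro p hp hcond k
    -- split every filtered sum through the cons decomposition
    have key : ∀ (P : (Fin (n+1) → Bool) → Prop) (_ : DecidablePred P),
        ∑ ω ∈ Finset.univ.filter P, p ω
          = (∑ d : Fin n → Bool, if P (Fin.cons true d) then p (Fin.cons true d) else 0)
            + ∑ d : Fin n → Bool, if P (Fin.cons false d) then p (Fin.cons false d) else 0 := by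
      intro P _
      rw [Finset.sum_filter, sum_cons (fun ω => if P ω then p ω else 0)]
    -- conditional-probability hypothesis transfers to each branch
    have hA : ∀ (b : Bool) (j : Fin n) (d : Fin n → Bool),
        ∑ d' ∈ Finset.univ.filter (fun d' => d' j = true ∧ ∀ i < j, d' i = d i),
            p (Fin.cons b d')
          ≤ β * ∑ d' ∈ Finset.univ.filter (fun d' => ∀ i < j, d' i = d i),
            p (Fin.cons b d') := by
      intro b j d
      have h := hcond j.succ (Fin.cons b d)
      rw [key _ inferInstance, key _ inferInstance] at h
      rw [Finset.sum_filter, Finset.sum_filter]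
      cases b
      · simp only [Fin.cons_succ, cons_past_iff] at h
        simpa using h
      · simp only [Fin.cons_succ, cons_past_iff] at h
        simpa using h
    -- mass of the `true` branch is at most β
    have hMt : ∑ d : Fin n → Bool, p (Fin.cons true d)
        ≤ β * ((∑ d : Fin n → Bool, p (Fin.cons true d))
          + ∑ d : Fin n → Bool, p (Fin.cons false d)) := by
      have h := hcond 0 (fun _ => false)
      rw [key _ inferInstance, key _ inferInstance] at h
      simpa [Fin.cons_zero] using h
    have htot : ∑ ω, p ω = (∑ d : Fin n → Bool, p (Fin.cons true d))
        + ∑ d : Fin n → Bool, p (Fin.cons false d) := sum_cons p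
    have hpt : ∀ d, 0 ≤ p (Fin.cons true d) := fun d => hp _
    have hpf : ∀ d, 0 ≤ p (Fin.cons false d) := fun d => hp _
    match k with
    | 0 =>
      rw [tail_zero, mul_one]
      rw [Finset.sum_filter]
      simp only [Nat.zero_le, if_true]
      exact le_rfl
    | k + 1 =>
      have hsplit : ∑ ω ∈ Finset.univ.filter (fun ω => k + 1 ≤ wins ω), p ω
          = (∑ d ∈ Finset.univ.filter (fun d : Fin n → Bool => k ≤ wins d),
              p (Fin.cons true d))
            + ∑ d ∈ Finset.univ.filter (fun d : Fin n → Bool => k + 1 ≤ wins d),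
              p (Fin.cons false d) := by
        rw [key _ inferInstance, Finset.sum_filter, Finset.sum_filter]
        congr 1
        · apply Finset.sum_congr rfl
          intro d _
          congr 1
          rw [eq_iff_iff]
          simp only [wins_cons]
          simp
          omega
        · apply Finset.sum_congr rfl
          intro d _
          congr 1
          rw [eq_iff_iff]
          simp only [wins_cons]
          simp
      have h1 := ih (fun d => p (Fin.cons true d)) hpt (hA true) k
      have h2 := ih (fun d => p (Fin.cons false d)) hpf (hA false) (k + 1)
      have hT := tail_anti hβ0 hβ1 n k
      have hTn0 := tail_nonneg hβ0 hβ1 n k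
      have hTn1 := tail_nonneg hβ0 hβ1 n (k + 1)
      rw [hsplit, tail_succ, htot]
      set Mt := ∑ d : Fin n → Bool, p (Fin.cons true d) with hMtdef
      set Mf := ∑ d : Fin n → Bool, p (Fin.cons false d) with hMfdef
      have hMt0 : 0 ≤ Mt := Finset.sum_nonneg fun d _ => hpt d
      have hMf0 : 0 ≤ Mf := Finset.sum_nonneg fun d _ => hpf d
      nlinarith [mul_nonneg (sub_nonneg.mpr hMt) (sub_nonneg.mpr hT), h1, h2,
        mul_nonneg hMf0 (sub_nonneg.mpr hT)]

end PBB


/-- If the conditional probability of winning each trial, given any past outcomes, is at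
most `β`, then the number of wins is stochastically dominated by a `Binomial(n, β)`:
`Pr[Σ D_j ≥ k] ≤ Σ_{i=k}^n C(n,i) β^i (1-β)^{n-i}`. -/
theorem pvalue_binomial_bound (n : ℕ) (β : ℝ) (hβ : β ∈ Set.Icc (0:ℝ) 1)
    (μ : Measure (Fin n → Bool)) [IsProbabilityMeasure μ]
    (hcond : ∀ (j : Fin n) (d : Fin n → Bool),
      (μ {ω | ω j = true ∧ ∀ i < j, ω i = d i}).toReal
        ≤ β * (μ {ω | ∀ i < j, ω i = d i}).toReal) (k : ℕ) :
    (μ {ω | k ≤ (Finset.univ.filter fun j => ω j = true).card}).toReal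
      ≤ ∑ i ∈ Finset.Icc k n, (n.choose i : ℝ) * β ^ i * (1 - β) ^ (n - i) := by
  classical
  have key : ∀ (P : (Fin n → Bool) → Prop) (inst : DecidablePred P),
      (μ {ω | P ω}).toReal
        = ∑ ω ∈ @Finset.filter _ P inst Finset.univ, (μ {ω} : ENNReal).toReal := by
    intro P inst
    have h1 : {ω | P ω} = ⋃ ω ∈ @Finset.filter _ P inst Finset.univ, ({ω} : Set _) := by
      ext x
      simp
    rw [h1, measure_biUnion_finset]
    · rw [ENNReal.toReal_sum]
      intro a _
      exact measure_ne_top μ _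
    · intro x _ y _ hxy
      simp only [Function.onFun]
      exact Set.disjoint_singleton.mpr hxy
    · intro b _
      exact measurableSet_singleton b
  have hone : ∑ ω : Fin n → Bool, (μ {ω} : ENNReal).toReal = 1 := by
    have h := key (fun _ => True) inferInstance
    simp only [Finset.filter_true] at h
    have : ({ω | True} : Set (Fin n → Bool)) = Set.univ := by ext; simp
    rw [this] at h
    rw [← h, measure_univ, ENNReal.toReal_one]
  have hcond' : ∀ (j : Fin n) (d : Fin n → Bool),
      ∑ ω ∈ Finset.univ.filter (fun ω => ω j = true ∧ ∀ i < j, ω i = d i),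
          (μ {ω} : ENNReal).toReal
        ≤ β * ∑ ω ∈ Finset.univ.filter (fun ω => ∀ i < j, ω i = d i),
          (μ {ω} : ENNReal).toReal := by
    intro j d
    have h := hcond j d
    rw [key (fun ω => ω j = true ∧ ∀ i < j, ω i = d i) inferInstance,
      key (fun ω => ∀ i < j, ω i = d i) inferInstance] at h
    exact h
  have h := PBB.core β hβ.1 hβ.2 n (fun ω => (μ {ω} : ENNReal).toReal)
    (fun ω => ENNReal.toReal_nonneg) hcond' k
  rw [hone, one_mul] at h
  rw [key (fun ω => k ≤ (Finset.univ.filter fun j => ω j = true).card) inferInstance]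
  simp only [Core.wins] at h
  exact h
end

section
/- Let A, B, X, Y be random variables such that (X,A) is independent of (Y,B), with X, Y uniform on {0,1}, X independent of A's conditional structure in the sense Pr[A=a,X=x] = Pr[X=x]·Pr[A=a|X=x] and similarly for B,Y. Define p_win = Σ_{x,y,a,b : x·y = a⊕b} Pr[A=a,B=b,X=x,Y=y]. Then p_win ≤ 3/4. -/
open MeasureTheory

/-- CHSH Bell inequality in win/lose form with perfect uniform RNGs: if the pairs
`(X,A)` and `(Y,B)` are independent and `X`, `Y` are uniform on `{0,1}`, then the
probability of winning the CHSH game (`x·y = a ⊕ b`) is at most `3/4`. -/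
theorem chsh_local_bound {Ω : Type*} {m0 : MeasurableSpace Ω}
    (μ : Measure Ω) [IsProbabilityMeasure μ]
    (A B X Y : Ω → Bool)
    (hA : Measurable A) (hB : Measurable B) (hX : Measurable X) (hY : Measurable Y)
    (hXunif : ∀ x, μ {ω | X ω = x} = 1/2)
    (hYunif : ∀ y, μ {ω | Y ω = y} = 1/2)
    (hInd : ProbabilityTheory.IndepFun (fun ω => (X ω, A ω)) (fun ω => (Y ω, B ω)) μ) :
    (μ {ω | (X ω && Y ω) = xor (A ω) (B ω)}).toReal ≤ 3/4 := by
  classical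
  set P : Bool → Bool → ENNReal := fun x a => μ {ω | X ω = x ∧ A ω = a} with hPdef
  set Q : Bool → Bool → ENNReal := fun y b => μ {ω | Y ω = y ∧ B ω = b} with hQdef
  have atom : ∀ x a y b, μ {ω | X ω = x ∧ A ω = a ∧ Y ω = y ∧ B ω = b} = P x a * Q y b := by
    intro x a y b
    have h := (ProbabilityTheory.indepFun_iff_measure_inter_preimage_eq_mul.mp hInd)
      {(x, a)} {(y, b)} (measurableSet_singleton _) (measurableSet_singleton _)
    simp only [Set.preimage, Set.mem_singleton_iff, Prod.mk.injEq] at h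
    convert h using 2
    ext ω
    simp [Set.mem_inter_iff, and_assoc]
  -- decompose winning event
  have hset : {ω | (X ω && Y ω) = xor (A ω) (B ω)} =
      ⋃ p ∈ (Finset.univ.filter
        (fun p : Bool × Bool × Bool × Bool => (p.1 && p.2.2.1) = xor p.2.1 p.2.2.2)),
        {ω | X ω = p.1 ∧ A ω = p.2.1 ∧ Y ω = p.2.2.1 ∧ B ω = p.2.2.2} := by
    ext ω
    simp only [Set.mem_setOf_eq, Set.mem_iUnion, Finset.mem_filter, Finset.mem_univ, true_and]
    constructor
    · intro h
      exact ⟨(X ω, A ω, Y ω, B ω), h, rfl, rfl, rfl, rfl⟩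
    · rintro ⟨p, hp, h1, h2, h3, h4⟩
      rw [h1, h2, h3, h4]; exact hp
  have hmeas : ∀ p : Bool × Bool × Bool × Bool,
      MeasurableSet {ω | X ω = p.1 ∧ A ω = p.2.1 ∧ Y ω = p.2.2.1 ∧ B ω = p.2.2.2} := by
    intro p
    exact (hX (measurableSet_singleton _)).inter ((hA (measurableSet_singleton _)).inter
      ((hY (measurableSet_singleton _)).inter (hB (measurableSet_singleton _))))
  have hmu : μ {ω | (X ω && Y ω) = xor (A ω) (B ω)} =
      ∑ p ∈ (Finset.univ.filter
        (fun p : Bool × Bool × Bool × Bool => (p.1 && p.2.2.1) = xor p.2.1 p.2.2.2)),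
        P p.1 p.2.1 * Q p.2.2.1 p.2.2.2 := by
    rw [hset, measure_biUnion_finset]
    · exact Finset.sum_congr rfl fun p _ => atom p.1 p.2.1 p.2.2.1 p.2.2.2
    · intro p _ q _ hpq
      simp only [Set.disjoint_left, Set.mem_setOf_eq]
      rintro ω ⟨h1, h2, h3, h4⟩ ⟨g1, g2, g3, g4⟩
      exact hpq (by rw [Prod.ext_iff, Prod.ext_iff, Prod.ext_iff]
                    exact ⟨h1.symm.trans g1, h2.symm.trans g2, h3.symm.trans g3, h4.symm.trans g4⟩)
    · intro p _; exact hmeas p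
  -- marginals
  have hPsum : ∀ x, P x false + P x true = 1/2 := by
    intro x
    rw [hPdef]
    have hdisj : Disjoint {ω | X ω = x ∧ A ω = false} {ω | X ω = x ∧ A ω = true} := by
      simp only [Set.disjoint_left, Set.mem_setOf_eq]
      rintro ω ⟨_, h⟩ ⟨_, h'⟩; simp [h] at h'
    have hm : MeasurableSet {ω | X ω = x ∧ A ω = true} :=
      (hX (measurableSet_singleton _)).inter (hA (measurableSet_singleton _))
    rw [← measure_union hdisj hm]
    have : {ω | X ω = x ∧ A ω = false} ∪ {ω | X ω = x ∧ A ω = true} = {ω | X ω = x} := by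
      ext ω; simp only [Set.mem_union, Set.mem_setOf_eq]
      rcases Bool.dichotomy (A ω) with h | h <;> simp [h]
    rw [this, hXunif]
  have hQsum : ∀ y, Q y false + Q y true = 1/2 := by
    intro y
    rw [hQdef]
    have hdisj : Disjoint {ω | Y ω = y ∧ B ω = false} {ω | Y ω = y ∧ B ω = true} := by
      simp only [Set.disjoint_left, Set.mem_setOf_eq]
      rintro ω ⟨_, h⟩ ⟨_, h'⟩; simp [h] at h'
    have hm : MeasurableSet {ω | Y ω = y ∧ B ω = true} :=
      (hY (measurableSet_singleton _)).inter (hB (measurableSet_singleton _))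
    rw [← measure_union hdisj hm]
    have : {ω | Y ω = y ∧ B ω = false} ∪ {ω | Y ω = y ∧ B ω = true} = {ω | Y ω = y} := by
      ext ω; simp only [Set.mem_union, Set.mem_setOf_eq]
      rcases Bool.dichotomy (B ω) with h | h <;> simp [h]
    rw [this, hYunif]
  -- pass to reals
  have hPfin : ∀ x a, P x a ≠ ⊤ := fun x a => measure_ne_top μ _
  have hQfin : ∀ y b, Q y b ≠ ⊤ := fun y b => measure_ne_top μ _
  set p : Bool → Bool → ℝ := fun x a => (P x a).toReal with hpdef
  set q : Bool → Bool → ℝ := fun y b => (Q y b).toReal with hqdef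
  have hpnn : ∀ x a, 0 ≤ p x a := fun x a => ENNReal.toReal_nonneg
  have hqnn : ∀ y b, 0 ≤ q y b := fun y b => ENNReal.toReal_nonneg
  have hpsum : ∀ x, p x false + p x true = 1/2 := by
    intro x
    rw [hpdef]
    simp only
    rw [← ENNReal.toReal_add (hPfin x false) (hPfin x true), hPsum]
    norm_num [ENNReal.toReal_div]
  have hqsum : ∀ y, q y false + q y true = 1/2 := by
    intro y
    rw [hqdef]
    simp only
    rw [← ENNReal.toReal_add (hQfin y false) (hQfin y true), hQsum]
    norm_num [ENNReal.toReal_div]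
  have hval : (μ {ω | (X ω && Y ω) = xor (A ω) (B ω)}).toReal =
      ∑ pp ∈ (Finset.univ.filter
        (fun pp : Bool × Bool × Bool × Bool => (pp.1 && pp.2.2.1) = xor pp.2.1 pp.2.2.2)),
        p pp.1 pp.2.1 * q pp.2.2.1 pp.2.2.2 := by
    rw [hmu, ENNReal.toReal_sum]
    · exact Finset.sum_congr rfl fun pp _ => ENNReal.toReal_mul
    · intro pp _
      exact ENNReal.mul_ne_top (hPfin _ _) (hQfin _ _)
  rw [hval]
  rw [Finset.sum_filter]
  simp only [Fintype.sum_prod_type, Fintype.sum_bool]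
  norm_num
  set a0 := p false true with ha0d
  set a1 := p true true with ha1d
  set b0 := q false true with hb0d
  set b1 := q true true with hb1d
  have e1 : p false false = 1/2 - a0 := by linarith [hpsum false]
  have e2 : p true false = 1/2 - a1 := by linarith [hpsum true]
  have e3 : q false false = 1/2 - b0 := by linarith [hqsum false]
  have e4 : q true false = 1/2 - b1 := by linarith [hqsum true]
  rw [e1, e2, e3, e4]
  have ha0 : 0 ≤ a0 := hpnn false true
  have ha1 : 0 ≤ a1 := hpnn true true
  have hb0 : 0 ≤ b0 := hqnn false true
  have hb1 : 0 ≤ b1 := hqnn true true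
  have ha0' : (0:ℝ) ≤ 1/2 - a0 := by have := hpnn false false; linarith
  have ha1' : (0:ℝ) ≤ 1/2 - a1 := by have := hpnn true false; linarith
  have hb0' : (0:ℝ) ≤ 1/2 - b0 := by have := hqnn false false; linarith
  have hb1' : (0:ℝ) ≤ 1/2 - b1 := by have := hqnn true false; linarith
  nlinarith [mul_nonneg (mul_nonneg ha0' ha1') hb0,
    mul_nonneg (mul_nonneg ha0' ha1) hb1,
    mul_nonneg (mul_nonneg ha0 hb1') ha1',
    mul_nonneg (mul_nonneg ha0 ha1) hb0']
end

section
/- Let C_1,...,C_n be random variables and c > 0 a threshold, with c/n > β_max and s_min ≤ β_max. Then the McDiarmid-type bound ((s_max-β_max)/(s_max-c/n))^{(s_max-c/n)/(s_max-s_min)} · ((β_max-s_min)/(c/n-s_min))^{(c/n-s_min)/(s_max-s_min)} is at most 1, with equality iff c/n = β_max; i.e., for s_min ≤ β_max < c/n < s_max the quantity is strictly less than 1. -/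
/-! Weighted AM–GM with the weights `(smax - r) / (smax - smin)` and `(r - smin) / (smax - smin)`:
the corresponding arithmetic mean of the two ratios telescopes to
`((smax - βmax) + (βmax - smin)) / (smax - smin) = 1`, and the inequality is strict because the
first ratio exceeds `1` while the second is below `1`. -/

/-- The per-trial McDiarmid bound factor is strictly less than `1` whenever
`s_min ≤ β_max < c/n < s_max`. -/
theorem mcdiarmid_factor_lt_one (smin smax βmax r : ℝ)
    (h1 : smin ≤ βmax) (h2 : βmax < r) (h3 : r < smax) :
    ((smax - βmax) / (smax - r)) ^ ((smax - r) / (smax - smin))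
        * ((βmax - smin) / (r - smin)) ^ ((r - smin) / (smax - smin)) < 1 := by
  have hr : smax - r ≠ 0 := by linarith
  have hr' : r - smin ≠ 0 := by linarith
  have hs : smax - smin ≠ 0 := by linarith
  have hweights : (smax - r) / (smax - smin) + (r - smin) / (smax - smin) = 1 := by
    field_simp; ring
  have hmean : (smax - r) / (smax - smin) * ((smax - βmax) / (smax - r))
      + (r - smin) / (smax - smin) * ((βmax - smin) / (r - smin)) = 1 := by
    field_simp; ring
  have hratio_gt : 1 < (smax - βmax) / (smax - r) := (one_lt_div (by linarith)).2 (by linarith)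
  have hratio_lt : (βmax - smin) / (r - smin) < 1 := (div_lt_one (by linarith)).2 (by linarith)
  calc _ < _ := (Real.geom_mean_lt_arith_mean2_weighted_iff_of_pos (by bound) (by bound)
          (by bound) (by bound) hweights).2 (hratio_lt.trans hratio_gt).ne'
    _ = 1 := hmean
end

section
/- Let 0 ≤ p_i ≤ 1 for i = 1,...,n be independent realizations, each a random variable stochastically dominating the uniform distribution on [0,1] (i.e., Pr[p_i ≤ u] ≤ u for all u ∈ [0,1]). Then the Fisher statistic F = -2 Σ_{i=1}^n log p_i satisfies Pr[F ≥ f] ≤ Pr[χ²_{2n} ≥ f] for every f ≥ 0. -/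
/-!
Write `X_i = -2 log p_i`. Superuniformity of `p_i` gives `P(X_i ≥ x) ≤ e^{-x/2}` for `x ≥ 0`,
i.e. the law of `X_i` is stochastically dominated by the exponential law of rate `1/2`.
Stochastic dominance (comparison of the masses of upper sets) is preserved by convolution,
since `(μ ∗ ν)(U) = ∫ ν(U - x) dμ(x)` and `U - x` is again an upper set, and the law of a sum of
independent variables is the convolution of their laws. Hence the law of `∑ X_i` is dominated
by the `n`-fold convolution of exponentials of rate `1/2`, which is the gamma law of shape `n`,
i.e. `χ²_{2n}`.
-/

open MeasureTheory ProbabilityTheory Set Real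

namespace MeasureTheory.Measure

variable {α : Type*} [MeasurableSpace α]

def StochasticallyLE [Preorder α] (μ ν : Measure α) : Prop :=
  ∀ s, IsUpperSet s → MeasurableSet s → μ s ≤ ν s

namespace StochasticallyLE

lemma trans [Preorder α] {μ ν ρ : Measure α} (h₁ : μ.StochasticallyLE ν)
    (h₂ : ν.StochasticallyLE ρ) : μ.StochasticallyLE ρ :=
  fun s hs hsm ↦ (h₁ s hs hsm).trans (h₂ s hs hsm)

variable [AddCommMonoid α] [PartialOrder α] [IsOrderedAddMonoid α] [MeasurableAdd₂ α]

lemma conv_left {μ ν : Measure α} [SFinite μ] [SFinite ν] (h : μ.StochasticallyLE ν)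
    (ρ : Measure α) : (ρ ∗ μ).StochasticallyLE (ρ ∗ ν) := by
  intro s hs hsm
  have hadd : MeasurableSet ((fun z : α × α ↦ z.1 + z.2) ⁻¹' s) := measurable_add hsm
  rw [Measure.conv, Measure.conv, map_apply measurable_add hsm, map_apply measurable_add hsm,
    prod_apply hadd, prod_apply hadd]
  exact lintegral_mono fun x ↦ h _ (hs.preimage fun _ _ hyz ↦ add_le_add_right hyz x)
    (measurable_prodMk_left hadd)

lemma conv {μ₁ μ₂ ν₁ ν₂ : Measure α} [SFinite μ₁] [SFinite μ₂] [SFinite ν₁] [SFinite ν₂]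
    (h₁ : μ₁.StochasticallyLE ν₁) (h₂ : μ₂.StochasticallyLE ν₂) :
    (μ₁ ∗ μ₂).StochasticallyLE (ν₁ ∗ ν₂) := by
  have h₁' : (μ₁ ∗ ν₂).StochasticallyLE (ν₁ ∗ ν₂) := by
    rw [conv_comm μ₁, conv_comm ν₁]
    exact h₁.conv_left ν₂
  exact (h₂.conv_left μ₁).trans h₁'

end StochasticallyLE

lemma stochasticallyLE_of_measure_Ici_le {μ ν : Measure ℝ} [NullSingletonClass ν]
    (h : ∀ x, μ (Ici x) ≤ ν (Ici x)) : μ.StochasticallyLE ν := by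
  intro s hs _
  rcases s.eq_empty_or_nonempty with rfl | hne
  · simp
  by_cases hbdd : BddBelow s
  · have hsub : s ⊆ Ici (sInf s) := fun x hx ↦ csInf_le hbdd hx
    have hsup : Ioi (sInf s) ⊆ s := fun x hx ↦ by
      obtain ⟨y, hys, hyx⟩ := exists_lt_of_csInf_lt hne hx
      exact hs hyx.le hys
    calc μ s ≤ μ (Ici (sInf s)) := measure_mono hsub
      _ ≤ ν (Ici (sInf s)) := h _
      _ = ν (Ioi (sInf s)) := measure_congr (Ioi_ae_eq_Ici' (measure_singleton _)).symm
      _ ≤ ν s := measure_mono hsup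
  · have huniv : s = univ := eq_univ_of_forall fun x ↦ by
      obtain ⟨y, hys, hyx⟩ := not_bddBelow_iff.mp hbdd x
      exact hs hyx.le hys
    have hanti : Antitone fun x : ℝ ↦ Ici x := fun _ _ hxy ↦ Ici_subset_Ici.mpr hxy
    rw [huniv, ← iUnion_Ici, hanti.measure_iUnion, hanti.measure_iUnion]
    exact iSup_mono h

end MeasureTheory.Measure

namespace ProbabilityTheory

open Measure

instance sFinite_gammaMeasure (a r : ℝ) : SFinite (gammaMeasure a r) :=
  inferInstanceAs (SFinite (volume.withDensity _))

instance sFinite_expMeasure (r : ℝ) : SFinite (expMeasure r) :=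
  sFinite_gammaMeasure 1 r

instance nullSingletonClass_expMeasure (r : ℝ) : NullSingletonClass (expMeasure r) :=
  inferInstanceAs (NullSingletonClass (volume.withDensity _))

lemma expMeasure_Ioi {r x : ℝ} (hr : 0 < r) (hx : 0 ≤ x) :
    expMeasure r (Ioi x) = ENNReal.ofReal (exp (-(r * x))) := by
  have := isProbabilityMeasure_expMeasure hr
  rw [← compl_Iic, prob_compl_eq_one_sub measurableSet_Iic, ← ofReal_cdf, cdf_expMeasure_eq hr,
    if_pos hx, ← ENNReal.ofReal_one, ← ENNReal.ofReal_sub _ (sub_nonneg.mpr (exp_le_one_iff.mpr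
      (neg_nonpos.mpr (mul_nonneg hr.le hx))))]
  ring_nf

lemma gammaMeasure_real {a r : ℝ} (ha : 0 < a) (hr : 0 < r) {s : Set ℝ} (hs : MeasurableSet s) :
    (gammaMeasure a r).real s = ∫ x in s, gammaPDFReal a r x := by
  rw [measureReal_def, gammaMeasure, withDensity_apply _ hs]
  unfold gammaPDF
  exact (integral_eq_lintegral_of_nonneg_ae (ae_of_all _ (gammaPDFReal_nonneg ha hr))
    (measurable_gammaPDFReal a r).aestronglyMeasurable).symm

lemma gammaPDFReal_natCast_succ (n : ℕ) (r : ℝ) {x : ℝ} (hx : 0 ≤ x) :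
    gammaPDFReal ((n + 1 : ℕ) : ℝ) r x = r ^ (n + 1) * x ^ n * exp (-(r * x)) / n.factorial := by
  rw [gammaPDFReal, if_pos hx, rpow_natCast, Nat.cast_succ, Gamma_nat_eq_factorial,
    add_sub_cancel_right, rpow_natCast]
  ring

lemma gammaPDF_lconvolution_exponentialPDF {a r : ℝ} (ha : 0 < a) (hr : 0 ≤ r) (x : ℝ) :
    (gammaPDF a r ⋆ₗ exponentialPDF r) x = gammaPDF (a + 1) r x := by
  rcases lt_or_ge x 0 with hx | hx
  · rw [gammaPDF_of_neg hx, lconvolution_def]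
    refine lintegral_eq_zero_of_ae_eq_zero (ae_of_all _ fun y ↦ ?_)
    rcases lt_or_ge y 0 with hy | hy
    · simp [gammaPDF_of_neg hy]
    · simp [exponentialPDF_of_neg (by linarith : -y + x < 0)]
  have hΓ := Gamma_pos_of_pos ha
  set c := r ^ (a + 1) / Gamma a * exp (-(r * x))
  -- the exponential factors combine to `exp (-(r * x))`, leaving only `y ^ (a - 1)` to integrate
  have hprod : ∀ y, gammaPDF a r y * exponentialPDF r (-y + x)
      = (Icc 0 x).indicator (fun y ↦ ENNReal.ofReal (c * y ^ (a - 1))) y := by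
    intro y
    by_cases hy : y ∈ Icc 0 x
    · rw [indicator_of_mem hy, gammaPDF_of_nonneg hy.1,
        exponentialPDF_of_nonneg (by linarith [hy.2]),
        ← ENNReal.ofReal_mul (by have := hy.1; positivity)]
      congr 1
      have hexp : exp (-(r * y)) * exp (-(r * (-y + x))) = exp (-(r * x)) := by
        rw [← exp_add]; ring_nf
      simp only [c, rpow_add_one' hr (by linarith : a + 1 ≠ 0)]
      linear_combination (r ^ a / Gamma a * r * y ^ (a - 1)) * hexp
    · rw [indicator_of_notMem hy]
      rcases lt_or_ge y 0 with hy0 | hy0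
      · simp [gammaPDF_of_neg hy0]
      · simp [exponentialPDF_of_neg (by simp_all : -y + x < 0)]
  rw [lconvolution_def, lintegral_congr hprod, lintegral_indicator measurableSet_Icc,
    ← ofReal_integral_eq_lintegral_ofReal, integral_Icc_eq_integral_Ioc,
    ← intervalIntegral.integral_of_le hx, intervalIntegral.integral_const_mul,
    integral_rpow (by left; linarith), gammaPDF_of_nonneg hx]
  · congr 1
    rw [Gamma_add_one ha.ne', zero_rpow (by linarith)]
    simp only [c, sub_add_cancel, add_sub_cancel_right, sub_zero]
    field_simp
  · exact (intervalIntegrable_iff_integrableOn_Icc_of_le hx).mp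
      ((intervalIntegral.intervalIntegrable_rpow' (by linarith : -1 < a - 1)).const_mul c)
  · filter_upwards [ae_restrict_mem measurableSet_Icc] with y hy
    have := hy.1
    positivity

lemma gammaMeasure_conv_expMeasure {a r : ℝ} (ha : 0 < a) (hr : 0 ≤ r) :
    gammaMeasure a r ∗ expMeasure r = gammaMeasure (a + 1) r := by
  have hexp : expMeasure r = volume.withDensity (exponentialPDF r) := rfl
  have hγ : Measurable (gammaPDF a r) := (measurable_gammaPDFReal a r).ennreal_ofReal
  have hε : Measurable (exponentialPDF r) := (measurable_exponentialPDFReal r).ennreal_ofReal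
  rw [gammaMeasure, hexp, conv_withDensity_eq_lconvolution hγ hε, gammaMeasure,
    funext (gammaPDF_lconvolution_exponentialPDF ha hr)]

lemma map_neg_log_div_stochasticallyLE_expMeasure {Ω : Type*} [MeasurableSpace Ω]
    {μ : Measure Ω} [IsProbabilityMeasure μ] {p : Ω → ℝ} (hpm : Measurable p)
    (hp0 : ∀ ω, 0 ≤ p ω) (hsuper : ∀ u ∈ Icc (0 : ℝ) 1, μ {ω | p ω ≤ u} ≤ ENNReal.ofReal u)
    {r : ℝ} (hr : 0 < r) : (μ.map fun ω ↦ -log (p ω) / r).StochasticallyLE (expMeasure r) := by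
  refine stochasticallyLE_of_measure_Ici_le fun x ↦ ?_
  rw [map_apply (by fun_prop) measurableSet_Ici]
  rcases le_or_gt x 0 with hx | hx
  · calc μ _ ≤ 1 := prob_le_one
      _ = expMeasure r (Ioi 0) := by simp [expMeasure_Ioi hr le_rfl]
      _ ≤ expMeasure r (Ici x) := measure_mono (Ioi_subset_Ici hx)
  have hsub : (fun ω ↦ -log (p ω) / r) ⁻¹' Ici x ⊆ {ω | p ω ≤ exp (-(r * x))} := by
    intro ω (hω : x ≤ -log (p ω) / r)
    rcases (hp0 ω).eq_or_lt with h0 | hpos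
    · simp [← h0, (exp_pos _).le]
    · rw [le_div_iff₀ hr] at hω
      calc p ω = exp (log (p ω)) := (exp_log hpos).symm
        _ ≤ exp (-(r * x)) := exp_le_exp.mpr (by linarith)
  calc μ _ ≤ μ {ω | p ω ≤ exp (-(r * x))} := measure_mono hsub
    _ ≤ ENNReal.ofReal (exp (-(r * x))) :=
      hsuper _ ⟨(exp_pos _).le, exp_le_one_iff.mpr (by nlinarith)⟩
    _ = expMeasure r (Ioi x) := (expMeasure_Ioi hr hx.le).symm
    _ ≤ expMeasure r (Ici x) := measure_mono Ioi_subset_Ici_self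

theorem iIndepFun.stochasticallyLE_gammaMeasure_map_sum {Ω ι : Type*}
    [MeasurableSpace Ω] {μ : Measure Ω} [IsFiniteMeasure μ] {X : ι → Ω → ℝ}
    (hXm : ∀ i, Measurable (X i)) (hind : iIndepFun X μ) {r : ℝ} (hr : 0 ≤ r)
    (hX : ∀ i, (μ.map (X i)).StochasticallyLE (expMeasure r)) {s : Finset ι} (hs : s.Nonempty) :
    (μ.map (∑ i ∈ s, X i)).StochasticallyLE (gammaMeasure s.card r) := by
  induction hs using Finset.Nonempty.cons_induction with
  | singleton i => simpa [expMeasure] using hX i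
  | cons j s hj hs ih =>
    have hindep : IndepFun (∑ i ∈ s, X i) (X j) μ := hind.indepFun_finsetSum_of_notMem hXm hj
    rw [Finset.sum_cons, add_comm, hindep.map_add_eq_map_conv_map (by fun_prop) (hXm j),
      Finset.card_cons, Nat.cast_succ, ← gammaMeasure_conv_expMeasure (by positivity) hr]
    exact ih.conv (hX j)

end ProbabilityTheory

open Nat in
/-- Fisher's method: if `p_1, ..., p_n` are independent superuniform (valid) P-values,
then the Fisher statistic `F = -2 Σ log p_i` is stochastically dominated by a
chi-squared distribution with `2n` degrees of freedom:
`Pr[F ≥ f] ≤ Pr[χ²_{2n} ≥ f]` for all `f ≥ 0`. -/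
theorem fisher_method {Ω : Type*} {m0 : MeasurableSpace Ω}
    (μ : Measure Ω) [IsProbabilityMeasure μ] (n : ℕ) (hn : 1 ≤ n)
    (p : Fin n → Ω → ℝ) (hmeas : ∀ i, Measurable (p i))
    (hrange : ∀ i ω, p i ω ∈ Set.Icc (0:ℝ) 1)
    (hsuper : ∀ i, ∀ u ∈ Set.Icc (0:ℝ) 1, μ {ω | p i ω ≤ u} ≤ ENNReal.ofReal u)
    (hindep : ProbabilityTheory.iIndepFun p μ) :
    ∀ f : ℝ, 0 ≤ f →
      (μ {ω | f ≤ -2 * ∑ i, Real.log (p i ω)}).toReal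
        ≤ ∫ t in Set.Ici f, t ^ (n - 1) * Real.exp (-t / 2) / (2 ^ n * ((n - 1)! : ℝ)) := by
  intro f hf
  obtain ⟨m, rfl⟩ := Nat.exists_eq_add_of_le' hn
  set X : Fin (m + 1) → Ω → ℝ := fun i ω ↦ -Real.log (p i ω) / (1 / 2)
  have hXm : ∀ i, Measurable (X i) := fun i ↦ by have := hmeas i; fun_prop
  have hX : ∀ i, (μ.map (X i)).StochasticallyLE (expMeasure (1 / 2)) := fun i ↦
    map_neg_log_div_stochasticallyLE_expMeasure (hmeas i) (fun ω ↦ (hrange i ω).1) (hsuper i)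
      (by norm_num)
  have hsum := (hindep.comp (fun _ x ↦ -Real.log x / (1 / 2)) fun _ ↦ by fun_prop)
    |>.stochasticallyLE_gammaMeasure_map_sum hXm (by norm_num) hX Finset.univ_nonempty
  have htail := hsum (Ici f) (isUpperSet_Ici f) measurableSet_Ici
  rw [Measure.map_apply (by fun_prop) measurableSet_Ici, Finset.card_univ, Fintype.card_fin]
    at htail
  have hset : {ω | f ≤ -2 * ∑ i, Real.log (p i ω)} = (∑ i, X i) ⁻¹' Ici f := by
    ext ω
    simp [X, Finset.mul_sum, mul_comm]
  have := isProbabilityMeasure_gammaMeasure (a := ((m + 1 : ℕ) : ℝ)) (r := 1 / 2)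
    (by positivity) (by norm_num)
  calc (μ {ω | f ≤ -2 * ∑ i, Real.log (p i ω)}).toReal
      ≤ (gammaMeasure ((m + 1 : ℕ) : ℝ) (1 / 2)).real (Ici f) :=
        ENNReal.toReal_mono (measure_ne_top _ _) (hset ▸ htail)
    _ = ∫ t in Ici f, gammaPDFReal ((m + 1 : ℕ) : ℝ) (1 / 2) t :=
        gammaMeasure_real (by positivity) (by norm_num) measurableSet_Ici
    _ = _ := setIntegral_congr_fun measurableSet_Ici fun t (ht : f ≤ t) ↦ by
        rw [gammaPDFReal_natCast_succ m _ (hf.trans ht), Nat.add_sub_cancel, neg_div,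
          div_eq_inv_mul t, one_div, inv_pow]
        field_simp
end
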